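/- Fix κ₀, B₀, B₀¹ ∈ ℂ and let P be the polynomial ring over ℂ in the variables y_{-n} and y¹_{-n} for n ≥ 1. Define ℂ-linear endomorphisms of P by: ρ(b_n) = multiplication by y_n and ρ(b¹_n) = multiplication by y¹_n for n < 0; ρ(b_n) = -2n κ₀ ∂/∂y_{-n} for n > 0; ρ(b¹_n) = -(2+2n) κ₀ ∂/∂y¹_{-2-n} - 4(1+2n) κ₀ ∂/∂y¹_{-1-n} for n > 0; ρ(b_0) = B₀ · id; and ρ(b¹_0) = -2κ₀ ∂/∂y¹_{-2} - 4κ₀ ∂/∂y¹_{-1} + B₀¹ · id. Then for all integers m, n the commutators satisfy: [ρ(b_m), ρ(b_n)] = -2m δ_{m+n,0} κ₀ · id, [ρ(b¹_m), ρ(b¹_n)] = 2((n+1) δ_{m+n,-2} + (4n+2) δ_{m+n,-1}) κ₀ · id, and [ρ(b¹_m), ρ(b_n)] = 0; that is, ρ defines a representation of the 3-point Heisenberg relations on P in which the central element 1₀ acts by κ₀ and the central element 1₁ acts by 0. -/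

import Mathlib

noncomputable section

/-- The polynomial ring `P = ℂ[y_{-n}, y¹_{-n} | n ≥ 1]`: the variable `Sum.inl j` stands for
`y_{-(j+1)}` and the variable `Sum.inr j` stands for `y¹_{-(j+1)}` (for `j : ℕ`). -/
abbrev HP : Type := MvPolynomial (ℕ ⊕ ℕ) ℂ

/-- The variable `y_n` (for `n < 0`). -/
def yv (n : ℤ) : HP := MvPolynomial.X (Sum.inl (-n - 1).toNat)

/-- The variable `y¹_n` (for `n < 0`). -/
def yv1 (n : ℤ) : HP := MvPolynomial.X (Sum.inr (-n - 1).toNat)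

/-- The formal partial derivative operator `∂/∂y_{-n}` (for `n ≥ 1`), as a `ℂ`-linear
endomorphism of `P`. -/
def pd (n : ℤ) : HP →ₗ[ℂ] HP := (MvPolynomial.pderiv (Sum.inl (n - 1).toNat)).toLinearMap

/-- The formal partial derivative operator `∂/∂y¹_{-n}` (for `n ≥ 1`), as a `ℂ`-linear
endomorphism of `P`. -/
def pd1 (n : ℤ) : HP →ₗ[ℂ] HP := (MvPolynomial.pderiv (Sum.inr (n - 1).toNat)).toLinearMap

/-- The operator `ρ(b_n)`:  multiplication by `y_n` for `n < 0`, the scalar `B₀` for `n = 0`,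
and `-2n κ₀ ∂/∂y_{-n}` for `n > 0`. -/
def ρb (κ₀ B₀ : ℂ) (n : ℤ) : HP →ₗ[ℂ] HP :=
  if n < 0 then LinearMap.mulLeft ℂ (yv n)
  else if n = 0 then B₀ • LinearMap.id
  else (-2 * (n : ℂ) * κ₀) • pd n

/-- The operator `ρ(b¹_n)`:  multiplication by `y¹_n` for `n < 0`,
`-2κ₀ ∂/∂y¹_{-2} - 4κ₀ ∂/∂y¹_{-1} + B01·id` for `n = 0`, and
`-(2+2n)κ₀ ∂/∂y¹_{-2-n} - 4(1+2n)κ₀ ∂/∂y¹_{-1-n}` for `n > 0`. -/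
def ρb1 (κ₀ B01 : ℂ) (n : ℤ) : HP →ₗ[ℂ] HP :=
  if n < 0 then LinearMap.mulLeft ℂ (yv1 n)
  else if n = 0 then (-2 * κ₀) • pd1 2 + (-4 * κ₀) • pd1 1 + B01 • LinearMap.id
  else (-(2 + 2 * (n : ℂ)) * κ₀) • pd1 (2 + n) + (-4 * (1 + 2 * (n : ℂ)) * κ₀) • pd1 (1 + n)


/-!
Each `ρ(b_n)` and `ρ(b¹_n)` is a linear combination of a multiplication by a variable, partial
derivatives and the identity. Derivatives commute with each other, multiplications commute with
each other, and `⁅∂/∂x_i, x_j⁆ = δ_ij`, so every commutator is a scalar, and it vanishes when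
`m` and `n` have the same sign. Both sides of each relation being skew-symmetric in `(m, n)`, only
the case `m ≥ 0 > n` needs a computation. The `b` and `b¹` families involve disjoint sets of
variables, hence commute.
-/

attribute [local instance] LieRing.ofAssociativeRing

namespace Module.End

variable {R M : Type*} [CommRing R] [AddCommGroup M] [Module R M]

-- Restated because `smul_lie` and `lie_smul` do not rewrite on the endomorphisms of a concrete
-- module such as `MvPolynomial σ R`: there the scalar action they expect (through the `Ring`
-- structure) agrees with the one in `c • A` only after unfolding non-reducible instances.
protected theorem smul_lie (c : R) (A B : Module.End R M) : ⁅c • A, B⁆ = c • ⁅A, B⁆ :=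
  smul_lie c A B

protected theorem lie_smul (c : R) (A B : Module.End R M) : ⁅A, c • B⁆ = c • ⁅A, B⁆ :=
  lie_smul c A B

theorem one_lie (A : Module.End R M) : ⁅(1 : Module.End R M), A⁆ = 0 := by
  rw [Ring.lie_def, one_mul, mul_one, sub_self]

theorem lie_one (A : Module.End R M) : ⁅A, (1 : Module.End R M)⁆ = 0 := by
  rw [Ring.lie_def, one_mul, mul_one, sub_self]

theorem lie_eq_smul_one_of_nonneg_of_neg (ρ : ℤ → Module.End R M) (c : ℤ → ℤ → R)
    (hc : ∀ m n, c n m = -c m n)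
    (hneg : ∀ m n, m < 0 → n < 0 → ⁅ρ m, ρ n⁆ = c m n • 1)
    (hnonneg : ∀ m n, 0 ≤ m → 0 ≤ n → ⁅ρ m, ρ n⁆ = c m n • 1)
    (hmix : ∀ m n, 0 ≤ m → n < 0 → ⁅ρ m, ρ n⁆ = c m n • 1) (m n : ℤ) :
    ⁅ρ m, ρ n⁆ = c m n • 1 := by
  rcases lt_or_ge m 0 with hm | hm <;> rcases lt_or_ge n 0 with hn | hn
  · exact hneg m n hm hn
  · rw [← lie_skew, hmix n m hn hm, hc, neg_smul, neg_neg]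
  · exact hmix m n hm hn
  · exact hnonneg m n hm hn

end Module.End

theorem LinearMap.lie_mulLeft_mulLeft {R A : Type*} [CommRing R] [CommRing A] [Algebra R A]
    (a b : A) : ⁅(mulLeft R a : Module.End R A), mulLeft R b⁆ = 0 :=
  LinearMap.ext fun p => by simp [Ring.lie_def, mul_left_comm a b]

namespace MvPolynomial

variable {R σ : Type*} [CommRing R]

theorem lie_pderiv_mulLeft (i : σ) (p : MvPolynomial σ R) :
    ⁅(pderiv (R := R) i).toLinearMap, LinearMap.mulLeft R p⁆ = LinearMap.mulLeft R (pderiv i p) :=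
  LinearMap.ext fun q => by simp [Ring.lie_def, mul_comm]

variable [DecidableEq σ]

theorem lie_pderiv_pderiv (i j : σ) :
    ⁅(pderiv (R := R) i).toLinearMap, (pderiv (R := R) j).toLinearMap⁆ = 0 := by
  have h : ⁅pderiv i, pderiv j⁆ = (0 : Derivation R (MvPolynomial σ R) _) :=
    derivation_ext fun k => by
      rw [Derivation.commutator_apply, pderiv_X, pderiv_X]
      simp [Pi.single_apply, apply_ite]
  rw [← Derivation.commutator_coe_linear_map, h]
  rfl

theorem lie_pderiv_mulLeft_X (i j : σ) :
    ⁅(pderiv (R := R) i).toLinearMap, LinearMap.mulLeft R (X j : MvPolynomial σ R)⁆ =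
      if j = i then 1 else 0 := by
  rw [lie_pderiv_mulLeft, pderiv_X, Pi.single_apply]
  split_ifs
  · exact LinearMap.mulLeft_one R _
  · exact LinearMap.mulLeft_zero_eq_zero R _

theorem lie_mulLeft_X_pderiv_of_ne {i j : σ} (h : j ≠ i) :
    ⁅LinearMap.mulLeft R (X j : MvPolynomial σ R), (pderiv (R := R) i).toLinearMap⁆ = 0 := by
  rw [← lie_skew, lie_pderiv_mulLeft_X, if_neg h, neg_zero]

end MvPolynomial

def cocycle₀ (κ : ℂ) (m n : ℤ) : ℂ := if m + n = 0 then -2 * (m : ℂ) * κ else 0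

def cocycle₁ (κ : ℂ) (m n : ℤ) : ℂ :=
  2 * ((if m + n = -2 then (n : ℂ) + 1 else 0) + (if m + n = -1 then 4 * (n : ℂ) + 2 else 0)) * κ

theorem cocycle₀_swap (κ : ℂ) (m n : ℤ) : cocycle₀ κ n m = -cocycle₀ κ m n := by
  rw [cocycle₀, cocycle₀, add_comm n m]
  split_ifs
  · rw [show n = -m by omega]; push_cast; ring
  · exact neg_zero.symm

theorem cocycle₁_swap (κ : ℂ) (m n : ℤ) : cocycle₁ κ n m = -cocycle₁ κ m n := by
  rw [cocycle₁, cocycle₁, add_comm n m]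
  split_ifs
  · omega
  · rw [show m = -2 - n by omega]; push_cast; ring
  · rw [show m = -1 - n by omega]; push_cast; ring
  · simp

section Representation

open MvPolynomial LinearMap

variable (κ₀ B₀ B01 : ℂ)

theorem ρb_of_neg {n : ℤ} (hn : n < 0) : ρb κ₀ B₀ n = mulLeft ℂ (yv n) := if_pos hn

theorem ρb_of_nonneg {n : ℤ} (hn : 0 ≤ n) :
    ρb κ₀ B₀ n = (-2 * (n : ℂ) * κ₀) • pd n + (if n = 0 then B₀ else 0) • 1 := by
  rw [ρb, if_neg hn.not_gt]
  split_ifs with h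
  · subst h
    rw [Int.cast_zero, mul_zero, zero_mul, zero_smul, zero_add, Module.End.one_eq_id]
  · rw [zero_smul, add_zero]

theorem ρb1_of_neg {n : ℤ} (hn : n < 0) : ρb1 κ₀ B01 n = mulLeft ℂ (yv1 n) := if_pos hn

theorem ρb1_of_nonneg {n : ℤ} (hn : 0 ≤ n) :
    ρb1 κ₀ B01 n = (-(2 + 2 * (n : ℂ)) * κ₀) • pd1 (2 + n) +
      (-4 * (1 + 2 * (n : ℂ)) * κ₀) • pd1 (1 + n) + (if n = 0 then B01 else 0) • 1 := by
  rw [ρb1, if_neg hn.not_gt]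
  split_ifs with h
  · subst h
    rw [Int.cast_zero, mul_zero, add_zero, add_zero, add_zero, add_zero, mul_one,
      Module.End.one_eq_id]
  · rw [zero_smul, add_zero]

theorem lie_pd_mulLeft_yv {k n : ℤ} (hk : 0 < k) (hn : n < 0) :
    ⁅pd k, mulLeft ℂ (yv n)⁆ = (if k + n = 0 then 1 else 0 : ℂ) • 1 := by
  rw [pd, yv, lie_pderiv_mulLeft_X]
  simp only [Sum.inl.injEq]
  split_ifs <;> first | omega | simp

theorem lie_pd1_mulLeft_yv1 {k n : ℤ} (hk : 0 < k) (hn : n < 0) :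
    ⁅pd1 k, mulLeft ℂ (yv1 n)⁆ = (if k + n = 0 then 1 else 0 : ℂ) • 1 := by
  rw [pd1, yv1, lie_pderiv_mulLeft_X]
  simp only [Sum.inr.injEq]
  split_ifs <;> first | omega | simp

theorem lie_ρb_of_nonneg_of_neg {m n : ℤ} (hm : 0 ≤ m) (hn : n < 0) :
    ⁅ρb κ₀ B₀ m, ρb κ₀ B₀ n⁆ = cocycle₀ κ₀ m n • 1 := by
  rw [ρb_of_nonneg κ₀ B₀ hm, ρb_of_neg κ₀ B₀ hn, add_lie, Module.End.smul_lie,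
    Module.End.smul_lie, Module.End.one_lie, smul_zero, add_zero]
  rcases hm.eq_or_lt with rfl | hm
  · simp [cocycle₀]
  · rw [lie_pd_mulLeft_yv hm hn, smul_smul, cocycle₀]
    congr 1
    split_ifs <;> simp

theorem lie_ρb (m n : ℤ) : ⁅ρb κ₀ B₀ m, ρb κ₀ B₀ n⁆ = cocycle₀ κ₀ m n • 1 := by
  refine Module.End.lie_eq_smul_one_of_nonneg_of_neg (ρb κ₀ B₀) (cocycle₀ κ₀)
    (cocycle₀_swap κ₀) (fun m n hm hn => ?_) (fun m n hm hn => ?_)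
    (fun m n => lie_ρb_of_nonneg_of_neg κ₀ B₀) m n
  · rw [ρb_of_neg κ₀ B₀ hm, ρb_of_neg κ₀ B₀ hn, lie_mulLeft_mulLeft, cocycle₀, if_neg (by omega),
      zero_smul]
  · have hc : cocycle₀ κ₀ m n = 0 := by
      rw [cocycle₀]
      split_ifs
      · simp [show m = 0 by omega]
      · rfl
    simp only [ρb_of_nonneg κ₀ B₀ hm, ρb_of_nonneg κ₀ B₀ hn, hc, pd, add_lie, lie_add,
      Module.End.smul_lie, Module.End.lie_smul, lie_pderiv_pderiv, Module.End.one_lie,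
      Module.End.lie_one, smul_zero, add_zero, zero_smul]

theorem lie_ρb1_of_nonneg_of_neg {m n : ℤ} (hm : 0 ≤ m) (hn : n < 0) :
    ⁅ρb1 κ₀ B01 m, ρb1 κ₀ B01 n⁆ = cocycle₁ κ₀ m n • 1 := by
  rw [ρb1_of_nonneg κ₀ B01 hm, ρb1_of_neg κ₀ B01 hn, add_lie, add_lie, Module.End.smul_lie,
    Module.End.smul_lie, Module.End.smul_lie, Module.End.one_lie, smul_zero, add_zero,
    lie_pd1_mulLeft_yv1 (by omega) hn, lie_pd1_mulLeft_yv1 (by omega) hn, smul_smul, smul_smul,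
    ← add_smul, cocycle₁]
  congr 1
  simp only [show 2 + m + n = 0 ↔ m + n = -2 by omega, show 1 + m + n = 0 ↔ m + n = -1 by omega]
  split_ifs
  · omega
  · rw [show n = -2 - m by omega]; push_cast; ring
  · rw [show n = -1 - m by omega]; push_cast; ring
  · simp

theorem lie_ρb1 (m n : ℤ) : ⁅ρb1 κ₀ B01 m, ρb1 κ₀ B01 n⁆ = cocycle₁ κ₀ m n • 1 := by
  refine Module.End.lie_eq_smul_one_of_nonneg_of_neg (ρb1 κ₀ B01) (cocycle₁ κ₀)
    (cocycle₁_swap κ₀) (fun m n hm hn => ?_) (fun m n hm hn => ?_)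
    (fun m n => lie_ρb1_of_nonneg_of_neg κ₀ B01) m n
  · have hc : cocycle₁ κ₀ m n = 0 := by
      rw [cocycle₁, if_neg (by omega : ¬m + n = -1), add_zero]
      split_ifs
      · simp [show n = -1 by omega]
      · simp
    rw [ρb1_of_neg κ₀ B01 hm, ρb1_of_neg κ₀ B01 hn, lie_mulLeft_mulLeft, hc, zero_smul]
  · have hc : cocycle₁ κ₀ m n = 0 := by
      rw [cocycle₁, if_neg (by omega), if_neg (by omega)]; simp
    simp only [ρb1_of_nonneg κ₀ B01 hm, ρb1_of_nonneg κ₀ B01 hn, hc, pd1, add_lie, lie_add,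
      Module.End.smul_lie, Module.End.lie_smul, lie_pderiv_pderiv, Module.End.one_lie,
      Module.End.lie_one, smul_zero, add_zero, zero_smul]

theorem lie_ρb1_ρb (m n : ℤ) : ⁅ρb1 κ₀ B01 m, ρb κ₀ B₀ n⁆ = 0 := by
  rcases lt_or_ge m 0 with hm | hm <;> rcases lt_or_ge n 0 with hn | hn <;>
  simp only [ρb1_of_neg, ρb1_of_nonneg, ρb_of_neg, ρb_of_nonneg, hm, hn, pd, pd1, yv, yv1,
    add_lie, lie_add, Module.End.smul_lie, Module.End.lie_smul, lie_mulLeft_mulLeft,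
    lie_pderiv_pderiv, lie_pderiv_mulLeft_X, lie_mulLeft_X_pderiv_of_ne, Module.End.one_lie,
    Module.End.lie_one, ne_eq, reduceCtorEq, not_false_eq_true, if_false, smul_zero, add_zero]

end Representation

/-- The operators `ρ(b_n)` and `ρ(b¹_n)` define a representation of the 3-point Heisenberg
relations on `P` in which the central element `1₀` acts by `κ₀` and `1₁` acts by `0`:
`[ρ(b_m), ρ(b_n)] = -2m δ_{m+n,0} κ₀ · id`,
`[ρ(b¹_m), ρ(b¹_n)] = 2((n+1) δ_{m+n,-2} + (4n+2) δ_{m+n,-1}) κ₀ · id`, and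
`[ρ(b¹_m), ρ(b_n)] = 0`. -/
theorem stmt_19 (κ₀ B₀ B01 : ℂ) (m n : ℤ) :
    ρb κ₀ B₀ m ∘ₗ ρb κ₀ B₀ n - ρb κ₀ B₀ n ∘ₗ ρb κ₀ B₀ m =
      (if m + n = 0 then -2 * (m : ℂ) * κ₀ else 0) • LinearMap.id ∧
    ρb1 κ₀ B01 m ∘ₗ ρb1 κ₀ B01 n - ρb1 κ₀ B01 n ∘ₗ ρb1 κ₀ B01 m =
      (2 * ((if m + n = -2 then (n : ℂ) + 1 else 0) +
        (if m + n = -1 then 4 * (n : ℂ) + 2 else 0)) * κ₀) • LinearMap.id ∧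
    ρb1 κ₀ B01 m ∘ₗ ρb κ₀ B₀ n - ρb κ₀ B₀ n ∘ₗ ρb1 κ₀ B01 m = 0 :=
  ⟨lie_ρb κ₀ B₀ m n, lie_ρb1 κ₀ B01 m n, lie_ρb1_ρb κ₀ B₀ B01 m n⟩
end
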